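/- For any two surreal numbers x < y of the same birthday α, there exists a surreal number z with birthday strictly less than α such that x < z < y. -/

import Mathlib

universe u

namespace SetTheory

/-- Pre-games (ported: removed from Mathlib). -/
inductive PGame : Type (u + 1)
  | mk : ∀ α β : Type u, (α → PGame) → (β → PGame) → PGame

namespace PGame

def LeftMoves : PGame.{u} → Type u
  | mk l _ _ _ => l

def RightMoves : PGame.{u} → Type u
  | mk _ r _ _ => r

def moveLeft : (g : PGame.{u}) → LeftMoves g → PGame.{u}
  | mk _ _ L _ => L

def moveRight : (g : PGame.{u}) → RightMoves g → PGame.{u}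
  | mk _ _ _ R => R

noncomputable def leLF (x : PGame.{u}) : PGame.{u} → Prop × Prop :=
  PGame.rec (motive := fun _ => PGame.{u} → Prop × Prop)
    (fun _ _ _ _ IHxL IHxR y =>
      PGame.rec (motive := fun _ => Prop × Prop)
        (fun yl yr yL yR IHyL IHyR =>
          ((∀ i, (IHxL i (mk yl yr yL yR)).2) ∧ (∀ j, (IHyR j).2),
           (∃ i, (IHyL i).1) ∨ (∃ j, (IHxR j (mk yl yr yL yR)).1))) y) x

instance : LE PGame.{u} := ⟨fun x y => (leLF x y).1⟩

def LF (x y : PGame.{u}) : Prop := (leLF x y).2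

theorem mk_le_mk {xl xr : Type u} {xL : xl → PGame.{u}} {xR : xr → PGame.{u}}
    {yl yr : Type u} {yL : yl → PGame.{u}} {yR : yr → PGame.{u}} :
    mk xl xr xL xR ≤ mk yl yr yL yR ↔
      (∀ i, LF (xL i) (mk yl yr yL yR)) ∧ ∀ j, LF (mk xl xr xL xR) (yR j) := Iff.rfl

theorem mk_lf_mk {xl xr : Type u} {xL : xl → PGame.{u}} {xR : xr → PGame.{u}}
    {yl yr : Type u} {yL : yl → PGame.{u}} {yR : yr → PGame.{u}} :
    LF (mk xl xr xL xR) (mk yl yr yL yR) ↔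
      (∃ i, mk xl xr xL xR ≤ yL i) ∨ ∃ j, xR j ≤ mk yl yr yL yR := Iff.rfl

theorem lf_iff_aux (x y : PGame.{u}) : (LF x y ↔ ¬ y ≤ x) ∧ (LF y x ↔ ¬ x ≤ y) := by
  induction x generalizing y with
  | mk xl xr xL xR ihL ihR =>
    induction y with
    | mk yl yr yL yR jhL jhR =>
      constructor
      · rw [mk_lf_mk, mk_le_mk]
        simp only [not_and_or, not_forall]
        exact or_congr (exists_congr fun i => by rw [(jhL i).2, not_not])
          (exists_congr fun j => by rw [(ihR j _).2, not_not])
      · rw [mk_lf_mk, mk_le_mk]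
        simp only [not_and_or, not_forall]
        exact or_congr (exists_congr fun i => by rw [(ihL i _).1, not_not])
          (exists_congr fun j => by rw [(jhR j).1, not_not])

theorem lf_iff_not_le (x y : PGame.{u}) : LF x y ↔ ¬ y ≤ x := (lf_iff_aux x y).1

theorem le_iff (x y : PGame.{u}) :
    x ≤ y ↔ (∀ i, ¬ y ≤ x.moveLeft i) ∧ ∀ j, ¬ y.moveRight j ≤ x := by
  cases x; cases y
  rw [mk_le_mk]
  simp only [lf_iff_not_le]
  rfl

theorem le_refl' (x : PGame.{u}) : x ≤ x := by
  induction x with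
  | mk xl xr xL xR ih jh =>
    rw [le_iff]
    exact ⟨fun i h => ((le_iff _ _).1 h).1 i (ih i),
      fun j h => ((le_iff _ _).1 h).2 j (jh j)⟩

theorem le_trans_aux (x y z : PGame.{u}) :
    (x ≤ y → y ≤ z → x ≤ z) ∧ (y ≤ z → z ≤ x → y ≤ x) ∧ (z ≤ x → x ≤ y → z ≤ y) := by
  induction x generalizing y z with
  | mk xl xr xL xR ihxL ihxR =>
  induction y generalizing z with
  | mk yl yr yL yR ihyL ihyR =>
  induction z with
  | mk zl zr zL zR ihzL ihzR =>
  refine ⟨fun h1 h2 => ?_, fun h1 h2 => ?_, fun h1 h2 => ?_⟩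
  · have h1' := (le_iff _ _).1 h1
    have h2' := (le_iff _ _).1 h2
    exact (le_iff _ _).2 ⟨fun i h => h1'.1 i ((ihxL i _ _).2.1 h2 h),
      fun j h => h2'.2 j ((ihzR j).2.2 h h1)⟩
  · have h1' := (le_iff _ _).1 h1
    have h2' := (le_iff _ _).1 h2
    exact (le_iff _ _).2 ⟨fun i h => h1'.1 i ((ihyL i _).2.2 h2 h),
      fun j h => h2'.2 j ((ihxR j _ _).1 h h1)⟩
  · have h1' := (le_iff _ _).1 h1
    have h2' := (le_iff _ _).1 h2
    exact (le_iff _ _).2 ⟨fun i h => h1'.1 i ((ihzL i).1 h2 h),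
      fun j h => h2'.2 j ((ihyR j _).2.1 h h1)⟩

theorem le_trans' {x y z : PGame.{u}} (h1 : x ≤ y) (h2 : y ≤ z) : x ≤ z :=
  (le_trans_aux x y z).1 h1 h2

instance : LT PGame.{u} := ⟨fun x y => x ≤ y ∧ ¬ y ≤ x⟩

/-- Equivalence of pre-games. -/
def Equiv (x y : PGame.{u}) : Prop := x ≤ y ∧ y ≤ x

theorem lt_congr' {x₁ y₁ x₂ y₂ : PGame.{u}} (hx : Equiv x₁ x₂) (hy : Equiv y₁ y₂) :
    x₁ < y₁ ↔ x₂ < y₂ := by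
  have key : ∀ {a₁ b₁ a₂ b₂ : PGame.{u}}, Equiv a₁ a₂ → Equiv b₁ b₂ → (a₁ ≤ b₁ → a₂ ≤ b₂) :=
    fun ha hb h => le_trans' ha.2 (le_trans' h hb.1)
  have hx' : Equiv x₂ x₁ := ⟨hx.2, hx.1⟩
  have hy' : Equiv y₂ y₁ := ⟨hy.2, hy.1⟩
  exact ⟨fun h => ⟨key hx hy h.1, fun h' => h.2 (key hy' hx' h')⟩,
    fun h => ⟨key hx' hy' h.1, fun h' => h.2 (key hy hx h')⟩⟩

/-- Numeric pre-games. -/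
def Numeric : PGame.{u} → Prop
  | mk _ _ L R => (∀ i j, L i < R j) ∧ (∀ i, Numeric (L i)) ∧ ∀ j, Numeric (R j)

/-- The birthday of a pre-game. -/
noncomputable def birthday : PGame.{u} → Ordinal.{u}
  | mk _ _ xL xR =>
    max (Ordinal.lsub.{u, u} fun i => birthday (xL i)) (Ordinal.lsub.{u, u} fun i => birthday (xR i))

/-- Equivalence of numeric pre-games. -/
instance numericSetoid : Setoid (Subtype Numeric.{u}) :=
  ⟨fun x y => Equiv x.1 y.1, ⟨fun x => ⟨le_refl' x.1, le_refl' x.1⟩, fun h => ⟨h.2, h.1⟩,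
    fun h1 h2 => ⟨le_trans' h1.1 h2.1, le_trans' h2.2 h1.2⟩⟩⟩

end PGame

end SetTheory

/-- Surreal numbers (ported: removed from Mathlib). -/
def Surreal : Type (u + 1) := Quotient SetTheory.PGame.numericSetoid.{u}

namespace Surreal

/-- The surreal number represented by a numeric pre-game. -/
def mk (x : SetTheory.PGame.{u}) (h : x.Numeric) : Surreal.{u} := Quotient.mk _ ⟨x, h⟩

instance : LT Surreal.{u} :=
  ⟨Quotient.lift₂ (fun x y => x.1 < y.1) fun _ _ _ _ hx hy => propext (SetTheory.PGame.lt_congr' hx hy)⟩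

end Surreal

open SetTheory

/-- The birthday of a surreal number: the least birthday of a numeric pregame
representing it. -/
noncomputable def Surreal.birthday (x : Surreal) : Ordinal :=
  sInf {o : Ordinal | ∃ (p : PGame) (h : p.Numeric), Surreal.mk p h = x ∧ p.birthday = o}

/-
If `p` and `q` are numeric pregames of minimal birthday representing `x < y`, then `p ⧏ q`
gives a left option `q^L` with `p ≤ q^L` or a right option `p^R` with `p^R ≤ q`. That option
lies strictly between `x` and `y`: it is strictly on one side by numericity, and it cannot be
equal to the endpoint on the other side, because its birthday is smaller than `α`, which is
the least birthday of any representative of either endpoint.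
-/

namespace SetTheory.PGame

theorem not_le_moveLeft (x : PGame.{u}) (i : x.LeftMoves) : ¬ x ≤ x.moveLeft i :=
  fun h => ((le_iff _ _).1 h).1 i (le_refl' _)

theorem not_moveRight_le (x : PGame.{u}) (j : x.RightMoves) : ¬ x.moveRight j ≤ x :=
  fun h => ((le_iff _ _).1 h).2 j (le_refl' _)

theorem exists_le_moveLeft_or_moveRight_le_of_not_le {x y : PGame.{u}} (h : ¬ y ≤ x) :
    (∃ i, x ≤ y.moveLeft i) ∨ ∃ j, x.moveRight j ≤ y := by
  contrapose! h
  exact (le_iff _ _).2 ⟨h.1, h.2⟩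

theorem Numeric.moveLeft {x : PGame.{u}} (h : x.Numeric) (i : x.LeftMoves) :
    (x.moveLeft i).Numeric := by
  cases x
  exact h.2.1 i

theorem Numeric.moveRight {x : PGame.{u}} (h : x.Numeric) (j : x.RightMoves) :
    (x.moveRight j).Numeric := by
  cases x
  exact h.2.2 j

theorem Numeric.moveLeft_le_and_le_moveRight {x : PGame.{u}} (h : x.Numeric) :
    (∀ i, x.moveLeft i ≤ x) ∧ ∀ j, x ≤ x.moveRight j := by
  induction x with
  | mk xl xr xL xR ihL ihR =>
    obtain ⟨hLR, hL, hR⟩ := h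
    refine ⟨fun i => (le_iff _ _).2 ⟨fun k hk => ?_, fun j hj => (hLR i j).2 hj⟩,
      fun j => (le_iff _ _).2 ⟨fun i hi => (hLR i j).2 hi, fun k hk => ?_⟩⟩
    · exact not_le_moveLeft (mk xl xr xL xR) i (le_trans' hk ((ihL i (hL i)).1 k))
    · exact not_moveRight_le (mk xl xr xL xR) j (le_trans' ((ihR j (hR j)).2 k) hk)

theorem Numeric.moveLeft_lt {x : PGame.{u}} (h : x.Numeric) (i : x.LeftMoves) :
    x.moveLeft i < x :=
  ⟨h.moveLeft_le_and_le_moveRight.1 i, not_le_moveLeft x i⟩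

theorem Numeric.lt_moveRight {x : PGame.{u}} (h : x.Numeric) (j : x.RightMoves) :
    x < x.moveRight j :=
  ⟨h.moveLeft_le_and_le_moveRight.2 j, not_moveRight_le x j⟩

theorem birthday_moveLeft_lt {x : PGame.{u}} (i : x.LeftMoves) :
    (x.moveLeft i).birthday < x.birthday := by
  cases x with
  | mk xl xr xL xR => exact (Ordinal.lt_iSup_add_one _ i).trans_le (le_max_left _ _)

theorem birthday_moveRight_lt {x : PGame.{u}} (j : x.RightMoves) :
    (x.moveRight j).birthday < x.birthday := by
  cases x with
  | mk xl xr xL xR => exact (Ordinal.lt_iSup_add_one _ j).trans_le (le_max_right _ _)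

end SetTheory.PGame

namespace Surreal

theorem birthday_mk_le {p : PGame.{u}} (hp : p.Numeric) : (mk p hp).birthday ≤ p.birthday :=
  csInf_le' ⟨p, hp, rfl, rfl⟩

theorem exists_mk_eq_and_birthday_eq (x : Surreal.{u}) :
    ∃ (p : PGame.{u}) (hp : p.Numeric), mk p hp = x ∧ p.birthday = x.birthday := by
  obtain ⟨⟨p, hp⟩, rfl⟩ := Quotient.exists_rep x
  exact csInf_mem (s := {o | ∃ (q : PGame) (hq : q.Numeric), mk q hq = _ ∧ q.birthday = o})
    ⟨p.birthday, p, hp, rfl, rfl⟩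

theorem mk_ne_of_birthday_lt {p : PGame.{u}} (hp : p.Numeric) {x : Surreal.{u}}
    (h : p.birthday < x.birthday) : mk p hp ≠ x := by
  rintro rfl
  exact (birthday_mk_le hp).not_gt h

theorem mk_lt_mk_of_le_of_ne {p q : PGame.{u}} (hp : p.Numeric) (hq : q.Numeric) (h : p ≤ q)
    (hne : mk p hp ≠ mk q hq) : mk p hp < mk q hq :=
  ⟨h, fun h' => hne (Quotient.sound ⟨h, h'⟩)⟩

end Surreal

/-- Between two surreal numbers `x < y` of the same birthday `α` there is a surreal
number of strictly smaller birthday. -/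
theorem exists_younger_between (x y : Surreal) (α : Ordinal)
    (hx : x.birthday = α) (hy : y.birthday = α) (hxy : x < y) :
    ∃ z : Surreal, z.birthday < α ∧ x < z ∧ z < y := by
  obtain ⟨p, hp, rfl, hpα⟩ := Surreal.exists_mk_eq_and_birthday_eq x
  obtain ⟨q, hq, rfl, hqα⟩ := Surreal.exists_mk_eq_and_birthday_eq y
  rcases PGame.exists_le_moveLeft_or_moveRight_le_of_not_le hxy.2 with ⟨i, hi⟩ | ⟨j, hj⟩
  · have hqL : (q.moveLeft i).birthday < α := (hqα.trans hy) ▸ PGame.birthday_moveLeft_lt i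
    refine ⟨Surreal.mk _ (hq.moveLeft i), (Surreal.birthday_mk_le _).trans_lt hqL, ?_,
      hq.moveLeft_lt i⟩
    exact Surreal.mk_lt_mk_of_le_of_ne _ _ hi (Surreal.mk_ne_of_birthday_lt _ (hx ▸ hqL)).symm
  · have hpR : (p.moveRight j).birthday < α := (hpα.trans hx) ▸ PGame.birthday_moveRight_lt j
    refine ⟨Surreal.mk _ (hp.moveRight j), (Surreal.birthday_mk_le _).trans_lt hpR,
      hp.lt_moveRight j, ?_⟩
    exact Surreal.mk_lt_mk_of_le_of_ne _ _ hj (Surreal.mk_ne_of_birthday_lt _ (hy ▸ hpR))
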